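/- (Quick consensus, Standard Consensus Protocol.) Consider n Bayesian agents with a common prior over finitely-valued random variables W, X_1, …, X_n, who in round-robin order repeatedly announce their exact Bayesian posterior distribution of W given their own private signal and all previous announcements (the Standard Consensus Protocol), with W binary so that H(W) ≤ 1 bit. For every ε > 0, within at most 2/ε rounds the protocol achieves ε-MI consensus: there is a round t ≤ 2/ε such that I(X_i; W | H^t) ≤ ε for every agent i, where H^t is the history of all announcements through round t. -/
import Mathlib


open scoped BigOperators

noncomputable section

variable {Ω : Type*} [Fintype Ω]

/-- `μ` is a probability mass function on the finite sample space `Ω`. -/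
def IsPmf (μ : Ω → ℝ) : Prop := (∀ ω, 0 ≤ μ ω) ∧ ∑ ω, μ ω = 1

open Classical in
/-- Probability of the event `A` under the pmf `μ`. -/
def pr (μ : Ω → ℝ) (A : Ω → Prop) : ℝ := ∑ ω, if A ω then μ ω else 0

/-- Conditional probability of `A` given `B` (with the convention `x / 0 = 0`). -/
def cpr (μ : Ω → ℝ) (A B : Ω → Prop) : ℝ := pr μ (fun ω => A ω ∧ B ω) / pr μ B

open Classical

section Basics

variable (μ : Ω → ℝ) (hμ : IsPmf μ)
include hμ

lemma pr_nonneg (A : Ω → Prop) : 0 ≤ pr μ A :=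
  Finset.sum_nonneg fun ω _ => by by_cases h : A ω <;> simp [pr, h, hμ.1 ω]

lemma pr_mono {A B : Ω → Prop} (h : ∀ ω, A ω → B ω) : pr μ A ≤ pr μ B := by
  apply Finset.sum_le_sum
  intro ω _
  by_cases hA : A ω
  · simp [hA, h ω hA]
  · by_cases hB : B ω <;> simp [hA, hB, hμ.1 ω]

omit hμ in
lemma pr_congr {A B : Ω → Prop} (h : ∀ ω, A ω ↔ B ω) : pr μ A = pr μ B := by
  unfold pr
  exact Finset.sum_congr rfl fun ω _ => by rw [h ω]

lemma pr_true : pr μ (fun _ => True) = 1 := by simp [pr, hμ.2]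

omit hμ in
lemma pr_empty {A : Ω → Prop} (h : ∀ ω, ¬ A ω) : pr μ A = 0 := by
  unfold pr; exact Finset.sum_eq_zero fun ω _ => if_neg (h ω)

lemma pr_le_one (A : Ω → Prop) : pr μ A ≤ 1 := by
  rw [← pr_true μ hμ]; exact pr_mono μ hμ fun ω _ => trivial

omit hμ in
lemma exists_of_pr_pos {A : Ω → Prop} (h : 0 < pr μ A) : ∃ ω, A ω := by
  by_contra hc
  push_neg at hc
  rw [pr_empty μ hc] at h
  exact lt_irrefl _ h

omit hμ in
lemma pr_partition {T : Type*} (Y : Ω → T) (A : Ω → Prop) :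
    ∑ y ∈ Finset.univ.image Y, pr μ (fun ω => A ω ∧ Y ω = y) = pr μ A := by
  unfold pr
  rw [Finset.sum_comm]
  apply Finset.sum_congr rfl
  intro ω _
  by_cases hA : A ω
  · rw [Finset.sum_eq_single_of_mem (Y ω) (Finset.mem_image_of_mem Y (Finset.mem_univ ω))]
    · simp [hA]
    · intro b _ hb
      exact if_neg (fun hc => hb hc.2.symm)
  · simp [hA]

omit hμ in
lemma pr_bool_split (W : Ω → Bool) (A : Ω → Prop) :
    pr μ A = pr μ (fun ω => W ω = true ∧ A ω) + pr μ (fun ω => W ω = false ∧ A ω) := by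
  unfold pr
  rw [← Finset.sum_add_distrib]
  apply Finset.sum_congr rfl
  intro ω _
  cases hw : W ω <;> by_cases hA : A ω <;> simp [hw, hA]

lemma pr_and_eq_cpr_mul (A B : Ω → Prop) : pr μ (fun ω => A ω ∧ B ω) = cpr μ A B * pr μ B := by
  unfold cpr
  rcases eq_or_lt_of_le (pr_nonneg μ hμ B) with h | h
  · rw [← h, mul_zero]
    have h0 : pr μ (fun ω => A ω ∧ B ω) ≤ 0 := le_of_le_of_eq (pr_mono μ hμ fun ω hω => hω.2) h.symm
    exact le_antisymm h0 (pr_nonneg μ hμ _)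
  · field_simp

lemma cpr_nonneg (A B : Ω → Prop) : 0 ≤ cpr μ A B :=
  div_nonneg (pr_nonneg μ hμ _) (pr_nonneg μ hμ _)

omit hμ in
lemma cpr_congr {A A' B B' : Ω → Prop} (h : ∀ ω, A ω ↔ A' ω) (h' : ∀ ω, B ω ↔ B' ω) :
    cpr μ A B = cpr μ A' B' := by
  unfold cpr
  rw [pr_congr μ (fun ω => and_congr (h ω) (h' ω)), pr_congr μ h']

omit hμ in
lemma gibbs {ι : Type*} (s : Finset ι) (p q : ι → ℝ) (hp : ∀ i ∈ s, 0 ≤ p i)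
    (hq : ∀ i ∈ s, 0 ≤ q i) (hpq : ∀ i ∈ s, 0 < p i → 0 < q i) :
    (∑ i ∈ s, p i) - (∑ i ∈ s, q i) ≤ ∑ i ∈ s, p i * Real.log (p i / q i) := by
  rw [← Finset.sum_sub_distrib]
  apply Finset.sum_le_sum
  intro i hi
  rcases eq_or_lt_of_le (hp i hi) with h | h
  · rw [← h]
    simpa using hq i hi
  · have hqi := hpq i hi h
    have hlog := Real.log_le_sub_one_of_pos (show (0:ℝ) < q i / p i by positivity)
    have hinv : Real.log (p i / q i) = - Real.log (q i / p i) := by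
      rw [← Real.log_inv]
      congr 1
      field_simp
    have hc : p i * (q i / p i) = q i := by field_simp
    nlinarith [hlog, h]

end Basics

open Classical in
/-- Mutual information in bits between the random variables `X` and `Y`,
`I(X;Y) = Σ_{x,y} P[X=x,Y=y] log₂( P[X=x,Y=y] / (P[X=x]·P[Y=y]) )`. -/
def mi2 (μ : Ω → ℝ) {S T : Type*} (X : Ω → S) (Y : Ω → T) : ℝ :=
  ∑ x ∈ Finset.univ.image X, ∑ y ∈ Finset.univ.image Y,
    pr μ (fun ω => X ω = x ∧ Y ω = y) *
      Real.logb 2 (pr μ (fun ω => X ω = x ∧ Y ω = y) /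
        (pr μ (fun ω => X ω = x) * pr μ (fun ω => Y ω = y)))

open Classical in
/-- Mutual information in bits between `X` and `Y` conditioned on the event `B`,
`I(X;Y|B) = Σ_{x,y} P[X=x,Y=y|B] log₂( P[X=x,Y=y|B] / (P[X=x|B]·P[Y=y|B]) )`. -/
def miOn2 (μ : Ω → ℝ) {S T : Type*} (X : Ω → S) (Y : Ω → T) (B : Ω → Prop) : ℝ :=
  ∑ x ∈ Finset.univ.image X, ∑ y ∈ Finset.univ.image Y,
    cpr μ (fun ω => X ω = x ∧ Y ω = y) B *
      Real.logb 2 (cpr μ (fun ω => X ω = x ∧ Y ω = y) B /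
        (cpr μ (fun ω => X ω = x) B * cpr μ (fun ω => Y ω = y) B))

open Classical in
/-- Conditional mutual information in bits `I(X;Y|Z) = E_Z[ I(X;Y|Z=z) ]`. -/
def cmi2 (μ : Ω → ℝ) {S T U : Type*} (X : Ω → S) (Y : Ω → T) (Z : Ω → U) : ℝ :=
  ∑ z ∈ Finset.univ.image Z,
    pr μ (fun ω => Z ω = z) * miOn2 μ X Y (fun ω => Z ω = z)

section MI

variable (μ : Ω → ℝ) (hμ : IsPmf μ)
include hμ

lemma cpr_mono {A A' B : Ω → Prop} (h : ∀ ω, A ω → A' ω) : cpr μ A B ≤ cpr μ A' B := by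
  unfold cpr
  rcases eq_or_lt_of_le (pr_nonneg μ hμ B) with hB | hB
  · rw [← hB, div_zero, div_zero]
  · have hAB : pr μ (fun ω => A ω ∧ B ω) ≤ pr μ (fun ω => A' ω ∧ B ω) :=
      pr_mono μ hμ (fun ω hω => ⟨h ω hω.1, hω.2⟩)
    gcongr

omit hμ in
lemma sum_cpr_marg {T : Type*} (Y : Ω → T) (B : Ω → Prop) :
    ∑ y ∈ Finset.univ.image Y, cpr μ (fun ω => Y ω = y) B = pr μ B / pr μ B := by
  unfold cpr
  rw [← Finset.sum_div]
  congr 1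
  rw [← pr_partition μ Y B]
  exact Finset.sum_congr rfl fun y _ => pr_congr μ fun ω => and_comm

omit hμ in
lemma sum_cpr_joint {S T : Type*} (X : Ω → S) (Y : Ω → T) (B : Ω → Prop) (x : S) :
    ∑ y ∈ Finset.univ.image Y, cpr μ (fun ω => X ω = x ∧ Y ω = y) B
      = cpr μ (fun ω => X ω = x) B := by
  unfold cpr
  rw [← Finset.sum_div]
  congr 1
  rw [← pr_partition μ Y (fun ω => X ω = x ∧ B ω)]
  exact Finset.sum_congr rfl fun y _ => pr_congr μ fun ω => by tauto

lemma miOn2_nonneg {S T : Type*} (X : Ω → S) (Y : Ω → T) (B : Ω → Prop) :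
    0 ≤ miOn2 μ X Y B := by
  rcases eq_or_lt_of_le (pr_nonneg μ hμ B) with hB | hB
  · have hB' : pr μ B = 0 := hB.symm
    simp [miOn2, cpr, hB']
  · have hlog2 : (0:ℝ) < Real.log 2 := Real.log_pos one_lt_two
    have key : miOn2 μ X Y B =
        (∑ p ∈ (Finset.univ.image X) ×ˢ (Finset.univ.image Y),
          cpr μ (fun ω => X ω = p.1 ∧ Y ω = p.2) B *
            Real.log (cpr μ (fun ω => X ω = p.1 ∧ Y ω = p.2) B /
              (cpr μ (fun ω => X ω = p.1) B * cpr μ (fun ω => Y ω = p.2) B))) / Real.log 2 := by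
      rw [Finset.sum_product, Finset.sum_div]
      unfold miOn2
      apply Finset.sum_congr rfl
      intro x _
      rw [Finset.sum_div]
      apply Finset.sum_congr rfl
      intro y _
      rw [Real.logb, mul_div_assoc]
    rw [key]
    apply div_nonneg _ (le_of_lt hlog2)
    have hg := gibbs ((Finset.univ.image X) ×ˢ (Finset.univ.image Y))
      (fun p => cpr μ (fun ω => X ω = p.1 ∧ Y ω = p.2) B)
      (fun p => cpr μ (fun ω => X ω = p.1) B * cpr μ (fun ω => Y ω = p.2) B)
      (fun p _ => cpr_nonneg μ hμ _ _)
      (fun p _ => mul_nonneg (cpr_nonneg μ hμ _ _) (cpr_nonneg μ hμ _ _))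
      (fun p _ hp => by
        have h1 : cpr μ (fun ω => X ω = p.1 ∧ Y ω = p.2) B ≤ cpr μ (fun ω => X ω = p.1) B :=
          cpr_mono μ hμ (fun ω h => h.1)
        have h2 : cpr μ (fun ω => X ω = p.1 ∧ Y ω = p.2) B ≤ cpr μ (fun ω => Y ω = p.2) B :=
          cpr_mono μ hμ (fun ω h => h.2)
        exact mul_pos (lt_of_lt_of_le hp h1) (lt_of_lt_of_le hp h2))
    have hsum1 : ∑ p ∈ (Finset.univ.image X) ×ˢ (Finset.univ.image Y),
        cpr μ (fun ω => X ω = p.1 ∧ Y ω = p.2) B = 1 := by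
      rw [Finset.sum_product]
      have : ∀ x ∈ Finset.univ.image X, ∑ y ∈ Finset.univ.image Y,
          cpr μ (fun ω => X ω = x ∧ Y ω = y) B = cpr μ (fun ω => X ω = x) B :=
        fun x _ => sum_cpr_joint μ X Y B x
      rw [Finset.sum_congr rfl this, sum_cpr_marg μ X B, div_self (ne_of_gt hB)]
    have hsum2 : ∑ p ∈ (Finset.univ.image X) ×ˢ (Finset.univ.image Y),
        cpr μ (fun ω => X ω = p.1) B * cpr μ (fun ω => Y ω = p.2) B = 1 := by
      rw [Finset.sum_product]
      dsimp only
      rw [← Finset.sum_mul_sum, sum_cpr_marg μ X B,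
        sum_cpr_marg μ Y B, div_self (ne_of_gt hB), mul_one]
    rw [hsum1, hsum2] at hg
    linarith

end MI

section MI2

variable (μ : Ω → ℝ) (hμ : IsPmf μ)
include hμ

lemma cpr_true (A : Ω → Prop) : cpr μ A (fun _ => True) = pr μ A := by
  unfold cpr
  rw [pr_true μ hμ, div_one]
  exact pr_congr μ fun ω => by tauto

lemma mi2_eq_miOn2_true {S T : Type*} (X : Ω → S) (Y : Ω → T) :
    mi2 μ X Y = miOn2 μ X Y (fun _ => True) := by
  unfold mi2 miOn2
  simp only [cpr_true μ hμ]

lemma mi2_nonneg {S T : Type*} (X : Ω → S) (Y : Ω → T) : 0 ≤ mi2 μ X Y := by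
  rw [mi2_eq_miOn2_true μ hμ]
  exact miOn2_nonneg μ hμ X Y _

lemma cmi2_nonneg {S T U : Type*} (X : Ω → S) (Y : Ω → T) (Z : Ω → U) : 0 ≤ cmi2 μ X Y Z :=
  Finset.sum_nonneg fun z _ => mul_nonneg (pr_nonneg μ hμ _) (miOn2_nonneg μ hμ _ _ _)

omit hμ in
lemma miOn2_symm {S T : Type*} (X : Ω → S) (Y : Ω → T) (B : Ω → Prop) :
    miOn2 μ X Y B = miOn2 μ Y X B := by
  unfold miOn2
  rw [Finset.sum_comm]
  apply Finset.sum_congr rfl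
  intro y _
  apply Finset.sum_congr rfl
  intro x _
  have h1 : cpr μ (fun ω => X ω = x ∧ Y ω = y) B = cpr μ (fun ω => Y ω = y ∧ X ω = x) B :=
    cpr_congr μ (fun ω => and_comm) (fun ω => Iff.rfl)
  rw [h1, mul_comm (cpr μ (fun ω => X ω = x) B)]

omit hμ in
lemma cmi2_symm {S T U : Type*} (X : Ω → S) (Y : Ω → T) (Z : Ω → U) :
    cmi2 μ X Y Z = cmi2 μ Y X Z := by
  unfold cmi2
  exact Finset.sum_congr rfl fun z _ => by rw [miOn2_symm]

omit hμ in
lemma chain_term (a b c d e : ℝ) (ha : 0 ≤ a) (hab : a ≤ b) (hac : a ≤ c) (had : a ≤ d)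
    (hae : a ≤ e) :
    a * Real.logb 2 (a / (e * d)) =
      a * Real.logb 2 (c / (e * b)) +
        b * ((a / b) * Real.logb 2 ((a / b) / ((c / b) * (d / b)))) := by
  rcases eq_or_lt_of_le ha with h0 | h0
  · rw [← h0]
    simp
  · have hb : 0 < b := lt_of_lt_of_le h0 hab
    have hc : 0 < c := lt_of_lt_of_le h0 hac
    have hd : 0 < d := lt_of_lt_of_le h0 had
    have he : 0 < e := lt_of_lt_of_le h0 hae
    have h1 : (a / b) / ((c / b) * (d / b)) = a * b / (c * d) := by
      field_simp
    have h2 : b * (a / b * Real.logb 2 (a * b / (c * d))) = a * Real.logb 2 (a * b / (c * d)) := by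
      field_simp
    have h3 : c / (e * b) * (a * b / (c * d)) = a / (e * d) := by
      rw [div_mul_div_comm, div_eq_div_iff (by positivity) (by positivity)]
      ring
    rw [h1, h2, ← mul_add, ← Real.logb_mul (by positivity) (by positivity), h3]

lemma mi2_chain {S T U : Type*} (W : Ω → S) (Y : Ω → T) (Z : Ω → U) :
    mi2 μ W (fun ω => (Y ω, Z ω)) = mi2 μ W Z + cmi2 μ W Y Z := by
  letI : DecidableEq (T × U) := fun a b => Classical.propDecidable (a = b)
  have hL : mi2 μ W (fun ω => (Y ω, Z ω)) =
      ∑ w ∈ Finset.univ.image W, ∑ z ∈ Finset.univ.image Z, ∑ y ∈ Finset.univ.image Y,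
        pr μ (fun ω => W ω = w ∧ Y ω = y ∧ Z ω = z) *
          Real.logb 2 (pr μ (fun ω => W ω = w ∧ Y ω = y ∧ Z ω = z) /
            (pr μ (fun ω => W ω = w) * pr μ (fun ω => Y ω = y ∧ Z ω = z))) := by
    unfold mi2
    apply Finset.sum_congr rfl
    intro w _
    have hsub : Finset.univ.image (fun ω => (Y ω, Z ω)) ⊆
        (Finset.univ.image Y) ×ˢ (Finset.univ.image Z) := by
      intro p hp
      rcases Finset.mem_image.mp hp with ⟨ω, _, rfl⟩
      exact Finset.mem_product.mpr
        ⟨Finset.mem_image_of_mem Y (Finset.mem_univ ω), Finset.mem_image_of_mem Z (Finset.mem_univ ω)⟩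
    beta_reduce
    trans (∑ p ∈ (Finset.univ.image Y) ×ˢ (Finset.univ.image Z),
      pr μ (fun ω => W ω = w ∧ (Y ω, Z ω) = p) *
        Real.logb 2 (pr μ (fun ω => W ω = w ∧ (Y ω, Z ω) = p) /
          (pr μ (fun ω => W ω = w) * pr μ (fun ω => (Y ω, Z ω) = p))))
    · apply Finset.sum_subset hsub
      intro p _ hp
      have h0 : pr μ (fun ω => W ω = w ∧ (Y ω, Z ω) = p) = 0 := by
        apply pr_empty μ
        intro ω hω
        exact hp (by rw [← hω.2]; exact Finset.mem_image_of_mem _ (Finset.mem_univ ω))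
      rw [h0, zero_mul]
    rw [Finset.sum_product, Finset.sum_comm]
    apply Finset.sum_congr rfl
    intro z _
    apply Finset.sum_congr rfl
    intro y _
    have e1 : pr μ (fun ω => W ω = w ∧ (Y ω, Z ω) = (y, z)) =
        pr μ (fun ω => W ω = w ∧ Y ω = y ∧ Z ω = z) :=
      pr_congr μ fun ω => by rw [Prod.mk.injEq]
    have e2 : pr μ (fun ω => (Y ω, Z ω) = (y, z)) = pr μ (fun ω => Y ω = y ∧ Z ω = z) :=
      pr_congr μ fun ω => by rw [Prod.mk.injEq]
    rw [e1, e2]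
  have hM : mi2 μ W Z =
      ∑ w ∈ Finset.univ.image W, ∑ z ∈ Finset.univ.image Z, ∑ y ∈ Finset.univ.image Y,
        pr μ (fun ω => W ω = w ∧ Y ω = y ∧ Z ω = z) *
          Real.logb 2 (pr μ (fun ω => W ω = w ∧ Z ω = z) /
            (pr μ (fun ω => W ω = w) * pr μ (fun ω => Z ω = z))) := by
    unfold mi2
    apply Finset.sum_congr rfl
    intro w _
    apply Finset.sum_congr rfl
    intro z _
    rw [← Finset.sum_mul]
    congr 1
    rw [← pr_partition μ Y (fun ω => W ω = w ∧ Z ω = z)]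
    exact Finset.sum_congr rfl fun y _ => pr_congr μ fun ω => by tauto
  have hC : cmi2 μ W Y Z =
      ∑ w ∈ Finset.univ.image W, ∑ z ∈ Finset.univ.image Z, ∑ y ∈ Finset.univ.image Y,
        pr μ (fun ω => Z ω = z) *
          ((pr μ (fun ω => W ω = w ∧ Y ω = y ∧ Z ω = z) / pr μ (fun ω => Z ω = z)) *
            Real.logb 2 ((pr μ (fun ω => W ω = w ∧ Y ω = y ∧ Z ω = z) / pr μ (fun ω => Z ω = z)) /
              ((pr μ (fun ω => W ω = w ∧ Z ω = z) / pr μ (fun ω => Z ω = z)) *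
                (pr μ (fun ω => Y ω = y ∧ Z ω = z) / pr μ (fun ω => Z ω = z))))) := by
    unfold cmi2 miOn2 cpr
    beta_reduce
    trans (∑ z ∈ Finset.univ.image Z, ∑ w ∈ Finset.univ.image W, ∑ y ∈ Finset.univ.image Y,
        pr μ (fun ω => Z ω = z) *
          ((pr μ (fun ω => (W ω = w ∧ Y ω = y) ∧ Z ω = z) / pr μ (fun ω => Z ω = z)) *
            Real.logb 2 ((pr μ (fun ω => (W ω = w ∧ Y ω = y) ∧ Z ω = z) / pr μ (fun ω => Z ω = z)) /
              ((pr μ (fun ω => W ω = w ∧ Z ω = z) / pr μ (fun ω => Z ω = z)) *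
                (pr μ (fun ω => Y ω = y ∧ Z ω = z) / pr μ (fun ω => Z ω = z))))))
    · apply Finset.sum_congr rfl
      intro z _
      rw [Finset.mul_sum]
      apply Finset.sum_congr rfl
      intro w _
      rw [Finset.mul_sum]
    rw [Finset.sum_comm]
    apply Finset.sum_congr rfl
    intro w _
    apply Finset.sum_congr rfl
    intro z _
    apply Finset.sum_congr rfl
    intro y _
    have e1 : pr μ (fun ω => (W ω = w ∧ Y ω = y) ∧ Z ω = z) =
        pr μ (fun ω => W ω = w ∧ Y ω = y ∧ Z ω = z) := pr_congr μ fun ω => by tauto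
    rw [e1]
  rw [hL, hM, hC, ← Finset.sum_add_distrib]
  apply Finset.sum_congr rfl
  intro w _
  rw [← Finset.sum_add_distrib]
  apply Finset.sum_congr rfl
  intro z _
  rw [← Finset.sum_add_distrib]
  apply Finset.sum_congr rfl
  intro y _
  have q1 : pr μ (fun ω => W ω = w ∧ Y ω = y ∧ Z ω = z) ≤ pr μ (fun ω => Z ω = z) :=
    pr_mono μ hμ fun ω h => h.2.2
  have q2 : pr μ (fun ω => W ω = w ∧ Y ω = y ∧ Z ω = z) ≤ pr μ (fun ω => W ω = w ∧ Z ω = z) :=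
    pr_mono μ hμ fun ω h => ⟨h.1, h.2.2⟩
  have q3 : pr μ (fun ω => W ω = w ∧ Y ω = y ∧ Z ω = z) ≤ pr μ (fun ω => Y ω = y ∧ Z ω = z) :=
    pr_mono μ hμ fun ω h => ⟨h.2.1, h.2.2⟩
  have q4 : pr μ (fun ω => W ω = w ∧ Y ω = y ∧ Z ω = z) ≤ pr μ (fun ω => W ω = w) :=
    pr_mono μ hμ fun ω h => h.1
  exact chain_term _ _ _ _ _ (pr_nonneg μ hμ _) q1 q2 q3 q4

end MI2

section Entropy

variable (μ : Ω → ℝ) (hμ : IsPmf μ)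
include hμ

omit hμ in
lemma entropy_bool (p : Bool → ℝ) (hp : ∀ w, 0 ≤ p w) (hsum : ∑ w, p w = 1) :
    ∑ w, p w * (- Real.logb 2 (p w)) ≤ 1 := by
  have hlog2 : (0:ℝ) < Real.log 2 := Real.log_pos one_lt_two
  have hg := gibbs (Finset.univ : Finset Bool) p (fun _ => (2:ℝ)⁻¹)
    (fun w _ => hp w) (fun w _ => by norm_num) (fun w _ _ => by norm_num)
  rw [hsum] at hg
  have hq : ∑ _w : Bool, (2:ℝ)⁻¹ = 1 := by norm_num
  rw [hq] at hg
  have hterm : ∀ w, p w * Real.log (p w / 2⁻¹) = p w * Real.log (p w) + p w * Real.log 2 := by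
    intro w
    rcases eq_or_lt_of_le (hp w) with h0 | h0
    · rw [← h0]; simp
    · rw [Real.log_div (ne_of_gt h0) (by norm_num), Real.log_inv]
      ring
  rw [Finset.sum_congr rfl (fun w _ => hterm w), Finset.sum_add_distrib,
    ← Finset.sum_mul, hsum, one_mul] at hg
  -- hg : 1 - 1 ≤ ∑ w, p w * log (p w) + log 2
  have hL : ∑ w, p w * Real.log (p w) ≥ - Real.log 2 := by linarith
  have hrw : ∀ w, p w * (- Real.logb 2 (p w)) = -(p w * Real.log (p w)) / Real.log 2 := by
    intro w
    rw [Real.logb]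
    field_simp
  calc ∑ w, p w * (- Real.logb 2 (p w)) = ∑ w : Bool, -(p w * Real.log (p w)) / Real.log 2 :=
        Finset.sum_congr rfl fun w _ => hrw w
  _ = (∑ w : Bool, -(p w * Real.log (p w))) / Real.log 2 := by rw [Finset.sum_div]
  _ = (-(∑ w : Bool, p w * Real.log (p w))) / Real.log 2 := by rw [Finset.sum_neg_distrib]
  _ ≤ 1 := by rw [div_le_one hlog2]; linarith

lemma mi2_le_one (W : Ω → Bool) {U : Type*} (Z : Ω → U) : mi2 μ W Z ≤ 1 := by
  letI : DecidableEq Bool := fun a b => Classical.propDecidable (a = b)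
  have hterm : ∀ w z, pr μ (fun ω => W ω = w ∧ Z ω = z) *
      Real.logb 2 (pr μ (fun ω => W ω = w ∧ Z ω = z) /
        (pr μ (fun ω => W ω = w) * pr μ (fun ω => Z ω = z))) ≤
      pr μ (fun ω => W ω = w ∧ Z ω = z) * (- Real.logb 2 (pr μ (fun ω => W ω = w))) := by
    intro w z
    rcases eq_or_lt_of_le (pr_nonneg μ hμ (fun ω => W ω = w ∧ Z ω = z)) with h0 | h0
    · rw [← h0]; simp
    · have hw : 0 < pr μ (fun ω => W ω = w) :=
        lt_of_lt_of_le h0 (pr_mono μ hμ fun ω h => h.1)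
      have hz : 0 < pr μ (fun ω => Z ω = z) :=
        lt_of_lt_of_le h0 (pr_mono μ hμ fun ω h => h.2)
      have haz : pr μ (fun ω => W ω = w ∧ Z ω = z) ≤ pr μ (fun ω => Z ω = z) :=
        pr_mono μ hμ fun ω h => h.2
      have hinv : (pr μ (fun ω => W ω = w))⁻¹ =
          pr μ (fun ω => Z ω = z) / (pr μ (fun ω => W ω = w) * pr μ (fun ω => Z ω = z)) := by
        rw [eq_div_iff (by positivity)]
        field_simp
      have hle : pr μ (fun ω => W ω = w ∧ Z ω = z) /
          (pr μ (fun ω => W ω = w) * pr μ (fun ω => Z ω = z)) ≤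
          (pr μ (fun ω => W ω = w))⁻¹ := by
        rw [hinv]
        gcongr
      have := Real.logb_le_logb_of_le (one_lt_two) (by positivity) hle
      rw [Real.logb_inv] at this
      exact mul_le_mul_of_nonneg_left this (le_of_lt h0)
  have step1 : mi2 μ W Z ≤ ∑ w ∈ Finset.univ.image W,
      (pr μ (fun ω => W ω = w)) * (- Real.logb 2 (pr μ (fun ω => W ω = w))) := by
    unfold mi2
    have : ∀ w ∈ Finset.univ.image W, ∑ z ∈ Finset.univ.image Z,
        pr μ (fun ω => W ω = w ∧ Z ω = z) *
          Real.logb 2 (pr μ (fun ω => W ω = w ∧ Z ω = z) /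
            (pr μ (fun ω => W ω = w) * pr μ (fun ω => Z ω = z))) ≤
        (pr μ (fun ω => W ω = w)) * (- Real.logb 2 (pr μ (fun ω => W ω = w))) := by
      intro w _
      calc _ ≤ ∑ z ∈ Finset.univ.image Z, pr μ (fun ω => W ω = w ∧ Z ω = z) *
            (- Real.logb 2 (pr μ (fun ω => W ω = w))) :=
            Finset.sum_le_sum fun z _ => hterm w z
      _ = (pr μ (fun ω => W ω = w)) * (- Real.logb 2 (pr μ (fun ω => W ω = w))) := by
            rw [← Finset.sum_mul, pr_partition μ Z (fun ω => W ω = w)]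
    exact Finset.sum_le_sum this
  have step2 : ∑ w ∈ Finset.univ.image W,
      (pr μ (fun ω => W ω = w)) * (- Real.logb 2 (pr μ (fun ω => W ω = w))) =
      ∑ w : Bool, (pr μ (fun ω => W ω = w)) * (- Real.logb 2 (pr μ (fun ω => W ω = w))) := by
    apply Finset.sum_subset (Finset.subset_univ _)
    intro w _ hw
    have : pr μ (fun ω => W ω = w) = 0 := by
      apply pr_empty μ
      intro ω hω
      exact hw (by rw [← hω]; exact Finset.mem_image_of_mem _ (Finset.mem_univ ω))
    rw [this, zero_mul]
  have hsum : ∑ w : Bool, pr μ (fun ω => W ω = w) = 1 := by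
    have := pr_bool_split μ W (fun _ => True)
    rw [pr_true μ hμ] at this
    have e1 : pr μ (fun ω => W ω = true ∧ True) = pr μ (fun ω => W ω = true) :=
      pr_congr μ fun ω => by tauto
    have e2 : pr μ (fun ω => W ω = false ∧ True) = pr μ (fun ω => W ω = false) :=
      pr_congr μ fun ω => by tauto
    rw [e1, e2] at this
    rw [Fintype.sum_bool]
    linarith
  calc mi2 μ W Z ≤ _ := step1
  _ = _ := step2
  _ ≤ 1 := entropy_bool _ (fun w => pr_nonneg μ hμ _) hsum

end Entropy

open Classical in
def fib {T : Type*} (Y : Ω → T) : Ω → Finset Ω := fun ω => Finset.univ.filter (fun ω' => Y ω' = Y ω)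

section Fib

variable (μ : Ω → ℝ) (hμ : IsPmf μ)

omit [Fintype Ω] in
lemma fib_congr {T T' : Type*} {Y : Ω → T} {Y' : Ω → T'}
    (h : ∀ ω ω', Y ω = Y ω' ↔ Y' ω = Y' ω') [Fintype Ω] : fib Y = fib Y' := by
  funext ω
  unfold fib
  apply Finset.filter_congr
  intro ω' _
  exact h ω' ω

lemma fib_eq_iff {T : Type*} (Y : Ω → T) (y : T) (ωy : Ω) (hy : Y ωy = y) (ω : Ω) :
    fib Y ω = fib Y ωy ↔ Y ω = y := by
  constructor
  · intro h
    have hmem : ω ∈ fib Y ω := by simp [fib]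
    rw [h] at hmem
    simp [fib] at hmem
    rw [hmem, hy]
  · intro h
    unfold fib
    apply Finset.filter_congr
    intro ω' _
    rw [h, hy]

lemma miOn2_congrB {S T : Type*} (X : Ω → S) (Y : Ω → T) {B B' : Ω → Prop}
    (h : ∀ ω, B ω ↔ B' ω) : miOn2 μ X Y B = miOn2 μ X Y B' := by
  unfold miOn2
  apply Finset.sum_congr rfl
  intro x _
  apply Finset.sum_congr rfl
  intro y _
  rw [cpr_congr μ (fun ω => Iff.rfl) h, cpr_congr μ (A := fun ω => X ω = x) (fun ω => Iff.rfl) h,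
    cpr_congr μ (A := fun ω => Y ω = y) (fun ω => Iff.rfl) h]

lemma mi2_fib {S T : Type*} (X : Ω → S) (Y : Ω → T) : mi2 μ X Y = mi2 μ X (fib Y) := by
  letI : DecidableEq (Finset Ω) := fun a b => Classical.propDecidable (a = b)
  unfold mi2
  apply Finset.sum_congr rfl
  intro x _
  have himg : Finset.univ.image (fib Y) =
      (Finset.univ.image Y).image (fun y => Finset.univ.filter (fun ω' => Y ω' = y)) := by
    rw [Finset.image_image]
    rfl
  have hinj : ∀ y ∈ Finset.univ.image Y, ∀ y' ∈ Finset.univ.image Y,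
      (fun y => Finset.univ.filter (fun ω' => Y ω' = y)) y =
      (fun y => Finset.univ.filter (fun ω' => Y ω' = y)) y' → y = y' := by
    intro y hy y' _ h
    rcases Finset.mem_image.mp hy with ⟨ω, _, rfl⟩
    beta_reduce at h
    have hmem : ω ∈ Finset.univ.filter (fun ω' => Y ω' = Y ω) := by simp
    rw [h] at hmem
    exact (Finset.mem_filter.mp hmem).2
  rw [himg, Finset.sum_image hinj]
  apply Finset.sum_congr rfl
  intro y hy
  rcases Finset.mem_image.mp hy with ⟨ωy, _, hωy⟩
  have hiff : ∀ ω, fib Y ω = Finset.univ.filter (fun ω' => Y ω' = y) ↔ Y ω = y := by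
    intro ω
    have : Finset.univ.filter (fun ω' => Y ω' = y) = fib Y ωy := by
      unfold fib
      rw [hωy]
    rw [this]
    exact fib_eq_iff Y y ωy hωy ω
  have e1 : pr μ (fun ω => X ω = x ∧ fib Y ω = Finset.univ.filter (fun ω' => Y ω' = y)) =
      pr μ (fun ω => X ω = x ∧ Y ω = y) :=
    pr_congr μ fun ω => and_congr Iff.rfl (hiff ω)
  have e2 : pr μ (fun ω => fib Y ω = Finset.univ.filter (fun ω' => Y ω' = y)) =
      pr μ (fun ω => Y ω = y) := pr_congr μ fun ω => hiff ω
  rw [e1, e2]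

lemma cmi2_fib {S T U : Type*} (X : Ω → S) (Y : Ω → T) (Z : Ω → U) :
    cmi2 μ X Y Z = cmi2 μ X Y (fib Z) := by
  letI : DecidableEq (Finset Ω) := fun a b => Classical.propDecidable (a = b)
  unfold cmi2
  have himg : Finset.univ.image (fib Z) =
      (Finset.univ.image Z).image (fun z => Finset.univ.filter (fun ω' => Z ω' = z)) := by
    rw [Finset.image_image]
    rfl
  have hinj : ∀ z ∈ Finset.univ.image Z, ∀ z' ∈ Finset.univ.image Z,
      (fun z => Finset.univ.filter (fun ω' => Z ω' = z)) z =
      (fun z => Finset.univ.filter (fun ω' => Z ω' = z)) z' → z = z' := by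
    intro z hz z' _ h
    rcases Finset.mem_image.mp hz with ⟨ω, _, rfl⟩
    beta_reduce at h
    have hmem : ω ∈ Finset.univ.filter (fun ω' => Z ω' = Z ω) := by simp
    rw [h] at hmem
    exact (Finset.mem_filter.mp hmem).2
  rw [himg, Finset.sum_image hinj]
  apply Finset.sum_congr rfl
  intro z hz
  rcases Finset.mem_image.mp hz with ⟨ωz, _, hωz⟩
  have hiff : ∀ ω, fib Z ω = Finset.univ.filter (fun ω' => Z ω' = z) ↔ Z ω = z := by
    intro ω
    have : Finset.univ.filter (fun ω' => Z ω' = z) = fib Z ωz := by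
      unfold fib
      rw [hωz]
    rw [this]
    exact fib_eq_iff Z z ωz hωz ω
  rw [pr_congr μ (fun ω => hiff ω), miOn2_congrB μ X Y (fun ω => hiff ω)]

lemma mi2_congr {S T T' : Type*} (X : Ω → S) {Y : Ω → T} {Y' : Ω → T'}
    (h : ∀ ω ω', Y ω = Y ω' ↔ Y' ω = Y' ω') : mi2 μ X Y = mi2 μ X Y' := by
  rw [mi2_fib μ X Y, mi2_fib μ X Y', fib_congr h]

lemma cmi2_congr3 {S T U U' : Type*} (X : Ω → S) (Y : Ω → T) {Z : Ω → U} {Z' : Ω → U'}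
    (h : ∀ ω ω', Z ω = Z ω' ↔ Z' ω = Z' ω') : cmi2 μ X Y Z = cmi2 μ X Y Z' := by
  rw [cmi2_fib μ X Y Z, cmi2_fib μ X Y Z', fib_congr h]

lemma mi2_le_refine (hμ : IsPmf μ) {S T U : Type*} (W : Ω → S) {V : Ω → T} {Uv : Ω → U}
    (h : ∀ ω ω', Uv ω = Uv ω' → V ω = V ω') : mi2 μ W V ≤ mi2 μ W Uv := by
  have hpair : mi2 μ W (fun ω => (Uv ω, V ω)) = mi2 μ W Uv := by
    apply mi2_congr μ W
    intro ω ω'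
    constructor
    · intro hp
      rw [Prod.mk.injEq] at hp
      exact hp.1
    · intro hu
      rw [Prod.mk.injEq]
      exact ⟨hu, h ω ω' hu⟩
  have hchain := mi2_chain μ hμ W Uv V
  have hnn := cmi2_nonneg μ hμ W Uv V
  linarith

end Fib

section Suff

variable (μ : Ω → ℝ) (hμ : IsPmf μ)
include hμ

lemma cmi2_zero_of_suff (W : Ω → Bool) {S U : Type*} (Y : Ω → S) (Z : Ω → U)
    (h : ∀ ω, 0 < pr μ (fun ω' => Y ω' = Y ω ∧ Z ω' = Z ω) →
      cpr μ (fun ω' => W ω' = true) (fun ω' => Y ω' = Y ω ∧ Z ω' = Z ω) =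
      cpr μ (fun ω' => W ω' = true) (fun ω' => Z ω' = Z ω)) :
    cmi2 μ W Y Z = 0 := by
  unfold cmi2
  apply Finset.sum_eq_zero
  intro z _
  rcases eq_or_lt_of_le (pr_nonneg μ hμ (fun ω => Z ω = z)) with hBz | hBz
  · rw [← hBz, zero_mul]
  · have hmi : miOn2 μ W Y (fun ω => Z ω = z) = 0 := by
      unfold miOn2
      apply Finset.sum_eq_zero
      intro w _
      apply Finset.sum_eq_zero
      intro y _
      rcases eq_or_lt_of_le (pr_nonneg μ hμ (fun ω => Y ω = y ∧ Z ω = z)) with hN | hN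
      · have h0 : pr μ (fun ω => (W ω = w ∧ Y ω = y) ∧ Z ω = z) = 0 := by
          apply le_antisymm _ (pr_nonneg μ hμ _)
          calc pr μ (fun ω => (W ω = w ∧ Y ω = y) ∧ Z ω = z) ≤
              pr μ (fun ω => Y ω = y ∧ Z ω = z) := pr_mono μ hμ fun ω hω => ⟨hω.1.2, hω.2⟩
          _ = 0 := hN.symm
        have hc : cpr μ (fun ω => W ω = w ∧ Y ω = y) (fun ω => Z ω = z) = 0 := by
          unfold cpr
          rw [h0, zero_div]
        rw [hc, zero_mul]
      · -- positive case: conditional independence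
        obtain ⟨ω0, hY0, hZ0⟩ := exists_of_pr_pos μ hN
        have hpos' : 0 < pr μ (fun ω' => Y ω' = Y ω0 ∧ Z ω' = Z ω0) := by
          rw [pr_congr μ (fun ω' => by rw [hY0, hZ0])]
          exact hN
        have hv := h ω0 hpos'
        rw [cpr_congr μ (A := fun ω' => W ω' = true) (fun ω' => Iff.rfl)
            (fun ω' => by rw [hY0, hZ0]),
          cpr_congr μ (A := fun ω' => W ω' = true) (B := fun ω' => Z ω' = Z ω0)
            (fun ω' => Iff.rfl) (fun ω' => by rw [hZ0])] at hv
        -- hv : cpr Wtrue (Y=y ∧ Z=z) = cpr Wtrue (Z=z)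
        set N := pr μ (fun ω => Y ω = y ∧ Z ω = z) with hNdef
        set Bz := pr μ (fun ω => Z ω = z) with hBzdef
        have hT1 : pr μ (fun ω => W ω = true ∧ Y ω = y ∧ Z ω = z) =
            cpr μ (fun ω => W ω = true) (fun ω => Y ω = y ∧ Z ω = z) * N :=
          pr_and_eq_cpr_mul μ hμ _ _
        have hT2 : pr μ (fun ω => W ω = true ∧ Z ω = z) =
            cpr μ (fun ω => W ω = true) (fun ω => Z ω = z) * Bz :=
          pr_and_eq_cpr_mul μ hμ _ _
        have hkey : pr μ (fun ω => W ω = true ∧ Y ω = y ∧ Z ω = z) * Bz =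
            pr μ (fun ω => W ω = true ∧ Z ω = z) * N := by
          rw [hT1, hT2, hv]
          ring
        have hsplitN := pr_bool_split μ W (fun ω => Y ω = y ∧ Z ω = z)
        have hsplitB := pr_bool_split μ W (fun ω => Z ω = z)
        have hprod : pr μ (fun ω => (W ω = w ∧ Y ω = y) ∧ Z ω = z) * Bz =
            pr μ (fun ω => W ω = w ∧ Z ω = z) * N := by
          have e1 : pr μ (fun ω => (W ω = w ∧ Y ω = y) ∧ Z ω = z) =
              pr μ (fun ω => W ω = w ∧ Y ω = y ∧ Z ω = z) := pr_congr μ fun ω => by tauto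
          rw [e1]
          cases w
          · -- w = false
            have ef : pr μ (fun ω => W ω = false ∧ Y ω = y ∧ Z ω = z) =
                N - pr μ (fun ω => W ω = true ∧ Y ω = y ∧ Z ω = z) := by
              rw [hNdef, hsplitN]; ring
            have ef2 : pr μ (fun ω => W ω = false ∧ Z ω = z) =
                Bz - pr μ (fun ω => W ω = true ∧ Z ω = z) := by
              rw [hBzdef, hsplitB]; ring
            rw [ef, ef2]
            nlinarith [hkey]
          · exact hkey
        -- now conclude the term is zero
        have hc : cpr μ (fun ω => W ω = w ∧ Y ω = y) (fun ω => Z ω = z) =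
            cpr μ (fun ω => W ω = w) (fun ω => Z ω = z) *
            cpr μ (fun ω => Y ω = y) (fun ω => Z ω = z) := by
          unfold cpr
          rw [div_mul_div_comm, div_eq_div_iff (ne_of_gt hBz) (by positivity)]
          nlinarith [hprod]
        rw [hc]
        rcases eq_or_ne (cpr μ (fun ω => W ω = w) (fun ω => Z ω = z) *
            cpr μ (fun ω => Y ω = y) (fun ω => Z ω = z)) 0 with hz0 | hz0
        · rw [hz0, zero_mul]
        · rw [div_self hz0, Real.logb_one, mul_zero]
    rw [hmi, mul_zero]

end Suff

/-- The flat sequence of announcements of the Standard Consensus Protocol with `n`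
agents: announcement `k` (for `k = 0, 1, 2, …`) is made by agent `k % n` and equals
that agent's exact Bayesian posterior probability of `W = true` given her private
signal `X (k % n)` and all previous announcements. -/
def ann {S : Type*} (μ : Ω → ℝ) (X : ℕ → Ω → S) (W : Ω → Bool) (n : ℕ) : ℕ → Ω → ℝ
  | k => fun ω => cpr μ (fun ω' => W ω' = true)
      (fun ω' => X (k % n) ω' = X (k % n) ω ∧
        ∀ j, j < k → ann μ X W n j ω' = ann μ X W n j ω)
  termination_by k => k

/-- The public history after `t` full rounds of the Standard Consensus Protocol:
the list of the first `n*t` announcements. -/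
def hist {S : Type*} (μ : Ω → ℝ) (X : ℕ → Ω → S) (W : Ω → Bool) (n : ℕ) (t : ℕ) :
    Ω → List ℝ :=
  fun ω => (List.range (n * t)).map fun k => ann μ X W n k ω

lemma map_range_eq_iff {m : ℕ} {f g : ℕ → ℝ} :
    (List.range m).map f = (List.range m).map g ↔ ∀ j < m, f j = g j := by
  induction m with
  | zero => simp
  | succ m ih =>
    rw [List.range_succ, List.map_append, List.map_append]
    constructor
    · intro h
      obtain ⟨h1, h2⟩ := List.append_inj' h (by simp)
      intro j hj
      rcases Nat.lt_succ_iff_lt_or_eq.mp hj with hj' | rfl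
      · exact ih.mp h1 j hj'
      · simpa using h2
    · intro h
      rw [ih.mpr (fun j hj => h j (Nat.lt_succ_of_lt hj))]
      simp [h m (Nat.lt_succ_self m)]

section Protocol

variable {S : Type*} (μ : Ω → ℝ) (hμ : IsPmf μ) (W : Ω → Bool) (n : ℕ) (X : ℕ → Ω → S)

/-- The first `m` announcements as a single random variable. -/
def pref (m : ℕ) : Ω → List ℝ := fun ω => (List.range m).map fun k => ann μ X W n k ω

lemma pref_eq_iff (m : ℕ) (ω ω' : Ω) :
    pref μ W n X m ω = pref μ W n X m ω' ↔
      ∀ j < m, ann μ X W n j ω = ann μ X W n j ω' := map_range_eq_iff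

lemma ann_eq (k : ℕ) (ω : Ω) : ann μ X W n k ω = cpr μ (fun ω' => W ω' = true)
    (fun ω' => X (k % n) ω' = X (k % n) ω ∧
      ∀ j, j < k → ann μ X W n j ω' = ann μ X W n j ω) := by
  rw [ann]

include hμ

lemma pref_mono_mi {m m' : ℕ} (h : m ≤ m') :
    mi2 μ W (pref μ W n X m) ≤ mi2 μ W (pref μ W n X m') := by
  apply mi2_le_refine μ hμ W
  intro ω ω' hp
  rw [pref_eq_iff] at hp ⊢
  exact fun j hj => hp j (lt_of_lt_of_le hj h)

lemma suff_step (t i : ℕ) (hi : i < n) :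
    cmi2 μ W (X i) (pref μ W n X (n * t + i + 1)) = 0 := by
  set k := n * t + i with hkdef
  have hk : k % n = i := by
    rw [hkdef, Nat.add_comm, Nat.mul_comm, Nat.add_mul_mod_self_right, Nat.mod_eq_of_lt hi]
  apply cmi2_zero_of_suff μ hμ W (X i) (pref μ W n X (k + 1))
  intro ω hpos
  -- the agent's own posterior `v`
  set v := ann μ X W n k ω with hvdef
  have hveq : v = cpr μ (fun ω' => W ω' = true)
      (fun ω' => X i ω' = X i ω ∧ ∀ j, j < k → ann μ X W n j ω' = ann μ X W n j ω) := by
    rw [hvdef, ann_eq, hk]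
  -- the announcement is constant given signal value and previous history
  have hannk : ∀ (x : S) (ω' : Ω), X i ω' = x →
      (∀ j, j < k → ann μ X W n j ω' = ann μ X W n j ω) →
      ann μ X W n k ω' = cpr μ (fun ω'' => W ω'' = true)
        (fun ω'' => X i ω'' = x ∧ ∀ j, j < k → ann μ X W n j ω'' = ann μ X W n j ω) := by
    intro x ω' hx hprev
    rw [ann_eq, hk]
    apply cpr_congr μ (fun ω'' => Iff.rfl)
    intro ω''
    apply and_congr
    · rw [hx]
    · exact forall₂_congr fun j hj => by rw [hprev j hj]
  -- LHS equality
  have hlhs : cpr μ (fun ω' => W ω' = true)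
      (fun ω' => X i ω' = X i ω ∧ pref μ W n X (k+1) ω' = pref μ W n X (k+1) ω) = v := by
    rw [cpr_congr μ (A := fun ω' => W ω' = true) (fun ω' => Iff.rfl)
      (B' := fun ω' => X i ω' = X i ω ∧ ∀ j, j < k → ann μ X W n j ω' = ann μ X W n j ω)
      (fun ω' => ?_), ← hveq]
    constructor
    · rintro ⟨hx, hp⟩
      exact ⟨hx, fun j hj => (pref_eq_iff μ W n X (k+1) ω' ω).mp hp j (Nat.lt_succ_of_lt hj)⟩
    · rintro ⟨hx, hprev⟩
      refine ⟨hx, (pref_eq_iff μ W n X (k+1) ω' ω).mpr fun j hj => ?_⟩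
      rcases Nat.lt_succ_iff_lt_or_eq.mp hj with hj' | rfl
      · exact hprev j hj'
      · rw [hannk (X i ω) ω' hx hprev, ← hveq, hvdef]
  -- RHS equality
  have hPv : pref μ W n X (k+1) ω = pref μ W n X (k+1) ω := rfl
  have hkey : ∀ x : S, pr μ (fun ω' => (W ω' = true ∧ pref μ W n X (k+1) ω' = pref μ W n X (k+1) ω)
        ∧ X i ω' = x) =
      v * pr μ (fun ω' => (pref μ W n X (k+1) ω' = pref μ W n X (k+1) ω) ∧ X i ω' = x) := by
    intro x
    set vx := cpr μ (fun ω'' => W ω'' = true)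
      (fun ω'' => X i ω'' = x ∧ ∀ j, j < k → ann μ X W n j ω'' = ann μ X W n j ω) with hvxdef
    by_cases hvx : vx = v
    · have hE : ∀ ω', (pref μ W n X (k+1) ω' = pref μ W n X (k+1) ω ∧ X i ω' = x) ↔
          (X i ω' = x ∧ ∀ j, j < k → ann μ X W n j ω' = ann μ X W n j ω) := by
        intro ω'
        constructor
        · rintro ⟨hp, hx⟩
          exact ⟨hx, fun j hj => (pref_eq_iff μ W n X (k+1) ω' ω).mp hp j (Nat.lt_succ_of_lt hj)⟩
        · rintro ⟨hx, hprev⟩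
          refine ⟨(pref_eq_iff μ W n X (k+1) ω' ω).mpr fun j hj => ?_, hx⟩
          rcases Nat.lt_succ_iff_lt_or_eq.mp hj with hj' | rfl
          · exact hprev j hj'
          · rw [hannk x ω' hx hprev, ← hvxdef, hvx, hvdef]
      have e1 : pr μ (fun ω' => (W ω' = true ∧ pref μ W n X (k+1) ω' = pref μ W n X (k+1) ω)
            ∧ X i ω' = x) =
          pr μ (fun ω' => W ω' = true ∧
            (X i ω' = x ∧ ∀ j, j < k → ann μ X W n j ω' = ann μ X W n j ω)) :=
        pr_congr μ fun ω' => by rw [← hE ω']; tauto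
      have e2 : pr μ (fun ω' => (pref μ W n X (k+1) ω' = pref μ W n X (k+1) ω) ∧ X i ω' = x) =
          pr μ (fun ω' => X i ω' = x ∧ ∀ j, j < k → ann μ X W n j ω' = ann μ X W n j ω) :=
        pr_congr μ fun ω' => hE ω'
      rw [e1, e2, pr_and_eq_cpr_mul μ hμ, ← hvxdef, hvx]
    · -- the event is empty
      have hempty : ∀ ω', ¬ ((pref μ W n X (k+1) ω' = pref μ W n X (k+1) ω) ∧ X i ω' = x) := by
        rintro ω' ⟨hp, hx⟩
        apply hvx
        have hprev : ∀ j, j < k → ann μ X W n j ω' = ann μ X W n j ω :=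
          fun j hj => (pref_eq_iff μ W n X (k+1) ω' ω).mp hp j (Nat.lt_succ_of_lt hj)
        have h1 : ann μ X W n k ω' = vx := by rw [hannk x ω' hx hprev, hvxdef]
        have h2 : ann μ X W n k ω' = v := by
          rw [hvdef]
          exact (pref_eq_iff μ W n X (k+1) ω' ω).mp hp k (Nat.lt_succ_self k)
        rw [← h1, h2]
      have z1 : pr μ (fun ω' => (W ω' = true ∧ pref μ W n X (k+1) ω' = pref μ W n X (k+1) ω)
            ∧ X i ω' = x) = 0 :=
        pr_empty μ fun ω' hω' => hempty ω' ⟨hω'.1.2, hω'.2⟩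
      have z2 : pr μ (fun ω' => (pref μ W n X (k+1) ω' = pref μ W n X (k+1) ω) ∧ X i ω' = x) = 0 :=
        pr_empty μ (fun ω' hω' => hempty ω' hω')
      rw [z1, z2, mul_zero]
  have hT : pr μ (fun ω' => W ω' = true ∧ pref μ W n X (k+1) ω' = pref μ W n X (k+1) ω) =
      v * pr μ (fun ω' => pref μ W n X (k+1) ω' = pref μ W n X (k+1) ω) := by
    rw [← pr_partition μ (X i) (fun ω' => W ω' = true ∧ pref μ W n X (k+1) ω' = pref μ W n X (k+1) ω),
      ← pr_partition μ (X i) (fun ω' => pref μ W n X (k+1) ω' = pref μ W n X (k+1) ω),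
      Finset.mul_sum]
    exact Finset.sum_congr rfl fun x _ => hkey x
  have hPpos : 0 < pr μ (fun ω' => pref μ W n X (k+1) ω' = pref μ W n X (k+1) ω) :=
    lt_of_lt_of_le hpos (pr_mono μ hμ fun ω' h' => h'.2)
  have hrhs : cpr μ (fun ω' => W ω' = true)
      (fun ω' => pref μ W n X (k+1) ω' = pref μ W n X (k+1) ω) = v := by
    unfold cpr
    rw [hT, mul_div_assoc, div_self (ne_of_gt hPpos), mul_one]
  rw [hlhs, hrhs]

lemma round_step (t i : ℕ) (hi : i < n) :
    cmi2 μ W (X i) (pref μ W n X (n * t)) ≤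
      mi2 μ W (pref μ W n X (n * (t+1))) - mi2 μ W (pref μ W n X (n * t)) := by
  have hchain0 := mi2_chain μ hμ W (X i) (pref μ W n X (n * t))
  have hchain1 := mi2_chain μ hμ W (X i) (pref μ W n X (n * t + i + 1))
  have hsuff := suff_step μ hμ W n X t i hi
  have hpair : mi2 μ W (fun ω => (X i ω, pref μ W n X (n * t) ω)) ≤
      mi2 μ W (fun ω => (X i ω, pref μ W n X (n * t + i + 1) ω)) := by
    apply mi2_le_refine μ hμ W
    intro ω ω' hp
    rw [Prod.mk.injEq] at hp ⊢
    refine ⟨hp.1, ?_⟩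
    rw [pref_eq_iff]
    exact fun j hj => (pref_eq_iff μ W n X _ ω ω').mp hp.2 j
      (lt_of_lt_of_le hj (by omega))
  have hI : mi2 μ W (pref μ W n X (n * t + i + 1)) ≤ mi2 μ W (pref μ W n X (n * (t+1))) :=
    pref_mono_mi μ hμ W n X (by nlinarith [hi])
  linarith

end Protocol

/-- Quick consensus in the Standard Consensus Protocol: with a binary event `W`
(so `H(W) ≤ 1` bit) and `n` agents with private signals `X 0, …, X (n-1)` who in
round-robin order announce their exact Bayesian posteriors, for every `ε > 0`
there is a round `t ≤ 2/ε` achieving ε-MI consensus: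
`I(X i; W | H^t) ≤ ε` for every agent `i`. -/
theorem quick_consensus_standard_protocol
    {S : Type*} (μ : Ω → ℝ) (hμ : IsPmf μ)
    (W : Ω → Bool) (n : ℕ) (hn : 0 < n) (X : ℕ → Ω → S)
    (ε : ℝ) (hε : 0 < ε) :
    ∃ t : ℕ, (t : ℝ) ≤ 2 / ε ∧
      ∀ i, i < n → cmi2 μ (X i) W (hist μ X W n t) ≤ ε := by
  by_contra hcon
  push_neg at hcon
  set M := Nat.floor (2/ε) with hMdef
  have h2ε : (0:ℝ) ≤ 2/ε := by positivity
  have hstep : ∀ t ≤ M, ε < mi2 μ W (pref μ W n X (n*(t+1))) - mi2 μ W (pref μ W n X (n*t)) := by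
    intro t ht
    have htr : (t:ℝ) ≤ 2/ε := le_trans (Nat.cast_le.mpr ht) (Nat.floor_le h2ε)
    obtain ⟨i, hi, hgt⟩ := hcon t htr
    have heq : cmi2 μ (X i) W (hist μ X W n t) = cmi2 μ W (X i) (pref μ W n X (n*t)) :=
      cmi2_symm μ (X i) W (pref μ W n X (n*t))
    have hr := round_step μ hμ W n X t i hi
    rw [heq] at hgt
    linarith
  have htel : ∑ t ∈ Finset.range (M+1),
      (mi2 μ W (pref μ W n X (n*(t+1))) - mi2 μ W (pref μ W n X (n*t))) =
      mi2 μ W (pref μ W n X (n*(M+1))) - mi2 μ W (pref μ W n X (n*0)) :=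
    Finset.sum_range_sub (fun t => mi2 μ W (pref μ W n X (n*t))) (M+1)
  have hub : mi2 μ W (pref μ W n X (n*(M+1))) ≤ 1 := mi2_le_one μ hμ W _
  have hlb : 0 ≤ mi2 μ W (pref μ W n X (n*0)) := mi2_nonneg μ hμ W _
  have hsum : ((M:ℝ)+1) * ε < ∑ t ∈ Finset.range (M+1),
      (mi2 μ W (pref μ W n X (n*(t+1))) - mi2 μ W (pref μ W n X (n*t))) := by
    have hlt := Finset.sum_lt_sum_of_nonempty
      (Finset.nonempty_range_iff.mpr (Nat.succ_ne_zero M))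
      (f := fun _ => ε)
      (g := fun t => mi2 μ W (pref μ W n X (n*(t+1))) - mi2 μ W (pref μ W n X (n*t)))
      (fun t ht => hstep t (Nat.lt_succ_iff.mp (Finset.mem_range.mp ht)))
    have hc : ∑ _t ∈ Finset.range (M+1), ε = ((M:ℝ)+1) * ε := by
      rw [Finset.sum_const, Finset.card_range, nsmul_eq_mul]
      push_cast
      ring
    linarith [hlt, hc.symm.le]
  have hflo : (2/ε) < (M:ℝ)+1 := by
    have := Nat.lt_floor_add_one (2/ε)
    push_cast at this ⊢
    linarith
  have h2 : 2 < ((M:ℝ)+1) * ε := by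
    rw [div_lt_iff₀ hε] at hflo
    linarith
  linarith
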